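/- arXiv:2404.17678 — 6 statements merged into one kernel-verified Lean document; each statement's English description precedes it below -/
import Mathlib

section
/- Let q be an odd prime power and let A and C be multiplicative characters of F_q^* with A^2 ≠ ε and C^2 = ε. Then for every λ ∈ F_q, _2F_2(A^2, Ā^2; ε, ε | λ)_q + _2F_2(A^2, Ā^2; ε, ε | −λ)_q = _4F_4(A, φA, Ā, φĀ; ε, φ, C, φC | λ^2)_q. -/
/-!
Both sides are character sums. Replacing `λ` by `-λ` multiplies the `χ`-term by `χ(-1)`, so the
left side sums `(1 + χ(-1))` times the `₂F₂` coefficient at `χ`. On the right, the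
Hasse–Davenport duplication formula `g(χ) g(φχ) χ(4) = g(φ) g(χ²)` turns the `₄F₄` coefficient at
`ψ` into the `₂F₂` coefficient at `ψ²`, and `ψ(λ²) = ψ²(λ)`. The character group is cyclic of even
order, so an even character has exactly two square roots and an odd one has none: summing over
`ψ` gives the same weight `1 + χ(-1)`.
-/

/-- The finite field hypergeometric function `ₘFₘ` of McCarthy, with upper parameters `A`,
lower parameters `B` (indexed by a finite type `ι`), and argument `lam`. -/
noncomputable def ffHyp {F : Type} [Field F] [Fintype F] (θ : AddChar F ℂ)
    {ι : Type} [Fintype ι] (A B : ι → MulChar F ℂ) (lam : F) : ℂ :=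
  letI : Fintype (MulChar F ℂ) := Fintype.ofFinite _
  (-1 : ℂ) / ((Fintype.card F : ℂ) - 1) *
    ∑ χ : MulChar F ℂ,
      (∏ i, (gaussSum (A i * χ) θ / gaussSum (A i) θ) *
        (gaussSum ((B i * χ)⁻¹) θ / gaussSum ((B i)⁻¹) θ)) *
      χ (-1) ^ (Fintype.card ι) * χ lam

open Finset

theorem IsCyclic.sq_eq_one_iff {G : Type*} [Group G] [Finite G] [IsCyclic G]
    {φ : G} (hφ : orderOf φ = 2) {ψ : G} : ψ ^ 2 = 1 ↔ ψ = 1 ∨ ψ = φ := by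
  classical
  have : Fintype G := Fintype.ofFinite G
  have hφ1 : φ ≠ 1 := by rintro rfl; simp at hφ
  have hsub : ({1, φ} : Finset G) ⊆ ({g | g ^ 2 = 1} : Finset G) := by
    simp [insert_subset_iff, ← hφ, pow_orderOf_eq_one]
  have hroots := eq_of_subset_of_card_le hsub
    ((IsCyclic.card_pow_eq_one_le two_pos).trans (card_pair hφ1.symm).ge)
  simpa using (Finset.ext_iff.mp hroots ψ).symm

theorem IsCyclic.index_range_powMonoidHom_two {G : Type*} [CommGroup G] [Finite G] [IsCyclic G]
    (h : 2 ∣ Nat.card G) : (powMonoidHom 2 : G →* G).range.index = 2 := by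
  rw [IsCyclic.index_powMonoidHom_range, Nat.gcd_eq_right h]

instance {F : Type*} [Field F] [Fintype F] : IsCyclic (MulChar F ℂ) :=
  isCyclic_of_surjective (MulChar.mulEquiv_units F ℂ).some.symm
    (MulChar.mulEquiv_units F ℂ).some.symm.surjective

theorem isUnit_four {F : Type*} [Field F] (hF : ringChar F ≠ 2) : IsUnit (4 : F) := by
  rw [show (4 : F) = 2 ^ 2 by norm_num]
  exact (Ring.two_ne_zero hF).isUnit.pow 2

theorem jacobiSum_self_mul_apply_four_eq_sum {F R : Type*} [Field F] [Fintype F] [CommRing R]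
    (hF : ringChar F ≠ 2) (χ : MulChar F R) : jacobiSum χ χ * χ 4 = ∑ s : F, χ (1 - s ^ 2) := by
  have h2 : (2 : F) ≠ 0 := Ring.two_ne_zero hF
  let e : F ≃ F :=
    { toFun := fun s => (1 + s) / 2, invFun := fun t => 2 * t - 1,
      left_inv := fun s => by field_simp; ring, right_inv := fun t => by field_simp; ring }
  rw [jacobiSum, ← e.sum_comp, sum_mul]
  refine sum_congr rfl fun s _ => ?_
  rw [← map_mul, ← map_mul]
  congr 1
  simp only [e, Equiv.coe_fn_mk]
  field_simp
  ring

section QuadraticCharacter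

variable {F : Type*} [Field F] [Fintype F] {φ : MulChar F ℂ}

theorem ringChar_ne_two_of_orderOf_eq_two (hφ : orderOf φ = 2) : ringChar F ≠ 2 := by
  intro h
  have hdvd := φ.orderOf_dvd_card_sub_one
  rw [hφ] at hdvd
  have heven := FiniteField.even_card_of_char_two h
  have hpos := Fintype.card_pos (α := F)
  omega

theorem MulChar.apply_four_of_orderOf_eq_two (hφ : orderOf φ = 2) : φ 4 = 1 := by
  have h2 : IsUnit (2 : F) := (Ring.two_ne_zero (ringChar_ne_two_of_orderOf_eq_two hφ)).isUnit
  rw [show (4 : F) = 2 ^ 2 by norm_num, map_pow, ← MulChar.pow_apply' _ two_ne_zero, ← hφ,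
    pow_orderOf_eq_one, MulChar.one_apply h2]

theorem MulChar.eq_ringHomComp_quadraticChar [DecidableEq F] (hφ : orderOf φ = 2) :
    φ = (quadraticChar F).ringHomComp (Int.castRingHom ℂ) := by
  have hne : (quadraticChar F).ringHomComp (Int.castRingHom ℂ) ≠ 1 :=
    (MulChar.ringHomComp_ne_one_iff Int.cast_injective).mpr
      (quadraticChar_ne_one (ringChar_ne_two_of_orderOf_eq_two hφ))
  exact (((IsCyclic.sq_eq_one_iff hφ).mp
    ((quadraticChar_isQuadratic F).comp _).sq_eq_one).resolve_left hne).symm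

theorem card_sq_eq_eq_one_add_apply [DecidableEq F] (hφ : orderOf φ = 2) (u : F) :
    (#{s : F | s ^ 2 = u} : ℂ) = 1 + φ u := by
  have h := quadraticChar_card_sqrts (ringChar_ne_two_of_orderOf_eq_two hφ) u
  rw [MulChar.eq_ringHomComp_quadraticChar hφ, MulChar.ringHomComp_apply, eq_intCast, add_comm]
  simp only [Set.toFinset_ofPred] at h
  exact_mod_cast h

theorem MulChar.exists_sq_eq_iff (hφ : orderOf φ = 2) (χ : MulChar F ℂ) :
    (∃ ψ : MulChar F ℂ, ψ ^ 2 = χ) ↔ χ (-1) = 1 := by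
  have hsq : ∀ ψ : MulChar F ℂ, (ψ ^ 2) (-1) = 1 := fun ψ => by
    rw [MulChar.pow_apply' _ two_ne_zero, ← map_pow, neg_one_sq, map_one]
  refine ⟨fun ⟨ψ, hψ⟩ => hψ ▸ hsq ψ, fun hχ => ?_⟩
  -- The squares form a subgroup of index 2 which misses some odd character `χ₁`.
  have hindex := IsCyclic.index_range_powMonoidHom_two (G := MulChar F ℂ)
    (hφ ▸ orderOf_dvd_natCard φ)
  obtain ⟨χ₁, hχ₁⟩ := MulChar.exists_apply_ne_one_of_hasEnoughRootsOfUnity F ℂ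
    (Ring.neg_one_ne_one_of_char_ne_two (ringChar_ne_two_of_orderOf_eq_two hφ))
  have hχ₁' : χ₁ ∉ (powMonoidHom 2 : MulChar F ℂ →* _).range :=
    fun ⟨ψ, hψ⟩ => hχ₁ (by rw [← hψ]; exact hsq ψ)
  by_contra hχ'
  obtain ⟨ψ, hψ⟩ := (Subgroup.mul_mem_iff_of_index_two hindex).mpr
    (iff_of_false (fun ⟨ψ, hψ⟩ => hχ' ⟨ψ, hψ⟩) hχ₁')
  rw [powMonoidHom_apply] at hψ
  have h := hsq ψ
  rw [hψ, MulChar.mul_apply, hχ, one_mul] at h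
  exact hχ₁ h

theorem MulChar.card_sq_eq_eq_one_add_apply_neg_one [Fintype (MulChar F ℂ)]
    (hφ : orderOf φ = 2) (χ : MulChar F ℂ) : (#{ψ | ψ ^ 2 = χ} : ℂ) = 1 + χ (-1) := by
  classical
  by_cases hχ : χ (-1) = 1
  · obtain ⟨ψ₀, rfl⟩ := (MulChar.exists_sq_eq_iff hφ χ).mpr hχ
    have hroots : ({ψ | ψ ^ 2 = 1} : Finset (MulChar F ℂ)) = {1, φ} := by
      ext ψ; simp [IsCyclic.sq_eq_one_iff hφ]
    have hφ1 : (1 : MulChar F ℂ) ≠ φ := by rintro rfl; simp at hφ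
    have hfiber := MonoidHom.card_fiber_eq_of_mem_range (powMonoidHom 2 : MulChar F ℂ →* _)
      ⟨ψ₀, rfl⟩ ⟨1, one_pow 2⟩
    simp only [powMonoidHom_apply] at hfiber
    rw [hfiber, hroots, card_pair hφ1, hχ]
    norm_num
  · have hempty : ({ψ | ψ ^ 2 = χ} : Finset (MulChar F ℂ)) = ∅ :=
      filter_eq_empty_iff.mpr fun ψ _ hψ => hχ ((MulChar.exists_sq_eq_iff hφ χ).mp ⟨ψ, hψ⟩)
    have hneg : χ (-1) = -1 :=
      (mul_self_eq_one_iff.mp (by rw [← map_mul, neg_mul_neg, one_mul, map_one])).resolve_left hχ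
    rw [hempty, hneg]
    norm_num

theorem MulChar.sum_comp_sq [Fintype (MulChar F ℂ)] (hφ : orderOf φ = 2)
    (f : MulChar F ℂ → ℂ) :
    ∑ ψ : MulChar F ℂ, f (ψ ^ 2) = ∑ χ : MulChar F ℂ, (1 + χ (-1)) * f χ := by
  classical
  rw [← sum_fiberwise univ (· ^ 2)]
  refine sum_congr rfl fun χ _ => ?_
  rw [sum_congr rfl fun ψ hψ => congrArg f (mem_filter.mp hψ).2, sum_const, nsmul_eq_mul,
    MulChar.card_sq_eq_eq_one_add_apply_neg_one hφ]

theorem jacobiSum_self_mul_apply_four (hφ : orderOf φ = 2) {χ : MulChar F ℂ} (hχ : χ ≠ 1) :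
    jacobiSum χ χ * χ 4 = jacobiSum φ χ := by
  classical
  have hshift : ∑ u : F, χ (1 - u) = 0 := by
    rw [Fintype.sum_equiv (Equiv.subLeft 1) (fun u => χ (1 - u)) χ fun _ => rfl]
    exact MulChar.sum_eq_zero_of_ne_one hχ
  calc jacobiSum χ χ * χ 4 = ∑ s : F, χ (1 - s ^ 2) :=
        jacobiSum_self_mul_apply_four_eq_sum (ringChar_ne_two_of_orderOf_eq_two hφ) χ
    _ = ∑ u : F, #{s : F | s ^ 2 = u} * χ (1 - u) := by
        rw [← sum_fiberwise univ (· ^ 2)]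
        refine sum_congr rfl fun u _ => ?_
        rw [sum_congr rfl fun s hs => congrArg (fun v => χ (1 - v)) (mem_filter.mp hs).2,
          sum_const, nsmul_eq_mul]
    _ = ∑ u : F, χ (1 - u) + jacobiSum φ χ := by
        simp only [card_sq_eq_eq_one_add_apply hφ, add_mul, one_mul, sum_add_distrib, jacobiSum]
    _ = jacobiSum φ χ := by rw [hshift, zero_add]

end QuadraticCharacter

section GaussSum

variable {F : Type*} [Field F] [Fintype F] {θ : AddChar F ℂ} {φ : MulChar F ℂ}

theorem gaussSum_ne_zero_of_ne_one (hθ : θ ≠ 1) (χ : MulChar F ℂ) : gaussSum χ θ ≠ 0 := by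
  rcases eq_or_ne χ 1 with rfl | hχ
  · simp [gaussSum_one_left hθ]
  · exact gaussSum_ne_zero_of_nontrivial (Nat.cast_ne_zero.mpr Fintype.card_ne_zero) hχ
      (AddChar.IsPrimitive.of_ne_one hθ)

/-- The Hasse–Davenport product formula for `n = 2`. -/
theorem gaussSum_mul_gaussSum_mul_apply_four (hθ : θ ≠ 1) (hφ : orderOf φ = 2)
    (χ : MulChar F ℂ) :
    gaussSum χ θ * gaussSum (φ * χ) θ * χ 4 = gaussSum φ θ * gaussSum (χ ^ 2) θ := by
  rcases eq_or_ne χ 1 with rfl | hχ1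
  · rw [mul_one, one_pow, MulChar.one_apply (isUnit_four (ringChar_ne_two_of_orderOf_eq_two hφ)),
      mul_one, mul_comm]
  rcases eq_or_ne χ φ with rfl | hχφ
  · rw [MulChar.apply_four_of_orderOf_eq_two hφ, mul_one, sq]
  have hχ2 : χ * χ ≠ 1 := by
    rw [← sq, Ne, IsCyclic.sq_eq_one_iff hφ]
    exact not_or.mpr ⟨hχ1, hχφ⟩
  have hφχ : φ * χ ≠ 1 := fun h => hχφ ((inv_eq_of_mul_eq_one_right h).symm.trans
    (inv_eq_self_of_orderOf_eq_two hφ))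
  have hJχχ := jacobiSum_mul_nontrivial hχ2 θ
  have hJφχ := jacobiSum_mul_nontrivial hφχ θ
  have hJ := jacobiSum_self_mul_apply_four hφ hχ1
  have hJ0 : jacobiSum χ χ ≠ 0 := by
    intro h
    rw [h, mul_zero] at hJχχ
    exact mul_ne_zero (gaussSum_ne_zero_of_ne_one hθ χ) (gaussSum_ne_zero_of_ne_one hθ χ)
      hJχχ.symm
  refine mul_right_cancel₀ hJ0 ?_
  rw [sq]
  linear_combination gaussSum χ θ * hJφχ + gaussSum χ θ * gaussSum (φ * χ) θ * hJ
    - gaussSum φ θ * hJχχ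

theorem gaussSum_mul_div_gaussSum_mul (hθ : θ ≠ 1) (hφ : orderOf φ = 2) (β χ : MulChar F ℂ) :
    gaussSum (β * χ) θ / gaussSum β θ * (gaussSum (φ * β * χ) θ / gaussSum (φ * β) θ)
      = gaussSum (β ^ 2 * χ ^ 2) θ / gaussSum (β ^ 2) θ * (χ 4)⁻¹ := by
  have h4 := isUnit_four (ringChar_ne_two_of_orderOf_eq_two hφ)
  have hβχ := gaussSum_mul_gaussSum_mul_apply_four hθ hφ (β * χ)
  have hβ := gaussSum_mul_gaussSum_mul_apply_four hθ hφ β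
  rw [mul_pow, MulChar.mul_apply, ← mul_assoc φ] at hβχ
  have hg := gaussSum_ne_zero_of_ne_one hθ
  have := hg β
  have := hg (φ * β)
  have := hg (β ^ 2)
  have hχ4 : χ 4 ≠ 0 := (h4.map χ).ne_zero
  have hβ4 : β 4 ≠ 0 := (h4.map β).ne_zero
  field_simp
  refine mul_right_cancel₀ (mul_ne_zero hβ4 (hg φ)) ?_
  linear_combination gaussSum (β ^ 2) θ * gaussSum φ θ * hβχ
    - gaussSum (β ^ 2 * χ ^ 2) θ * gaussSum φ θ * hβ

theorem gaussSum_inv_mul_div_gaussSum_inv_mul (hθ : θ ≠ 1) (hφ : orderOf φ = 2)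
    (β χ : MulChar F ℂ) :
    gaussSum (β * χ)⁻¹ θ / gaussSum β⁻¹ θ * (gaussSum (φ * β * χ)⁻¹ θ / gaussSum (φ * β)⁻¹ θ)
      = gaussSum (β ^ 2 * χ ^ 2)⁻¹ θ / gaussSum (β ^ 2)⁻¹ θ * χ 4 := by
  have h := gaussSum_mul_div_gaussSum_mul hθ hφ β⁻¹ χ⁻¹
  rwa [MulChar.inv_apply_eq_inv', inv_inv, ← inv_eq_self_of_orderOf_eq_two hφ, ← mul_inv,
    ← mul_inv, ← mul_inv, inv_pow, inv_pow, ← mul_inv] at h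

end GaussSum

section Hypergeometric

variable {F : Type} [Field F] [Fintype F] {φ : MulChar F ℂ} {ι : Type} [Fintype ι]
  (θ : AddChar F ℂ)

noncomputable def ffHypCoeff (A B : ι → MulChar F ℂ) (χ : MulChar F ℂ) : ℂ :=
  ∏ i, (gaussSum (A i * χ) θ / gaussSum (A i) θ) *
    (gaussSum ((B i * χ)⁻¹) θ / gaussSum ((B i)⁻¹) θ)

theorem ffHyp_eq [Fintype (MulChar F ℂ)] (A B : ι → MulChar F ℂ) (lam : F) :
    ffHyp θ A B lam = (-1 : ℂ) / ((Fintype.card F : ℂ) - 1) *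
      ∑ χ : MulChar F ℂ, ffHypCoeff θ A B χ * χ (-1) ^ (Fintype.card ι) * χ lam := by
  unfold ffHyp ffHypCoeff
  congr!

theorem ffHyp_add_ffHyp_neg [Fintype (MulChar F ℂ)] (hι : Even (Fintype.card ι))
    (A B : ι → MulChar F ℂ) (lam : F) :
    ffHyp θ A B lam + ffHyp θ A B (-lam) = (-1 : ℂ) / ((Fintype.card F : ℂ) - 1) *
      ∑ χ : MulChar F ℂ, (1 + χ (-1)) * (ffHypCoeff θ A B χ * χ lam) := by
  rw [ffHyp_eq, ffHyp_eq, ← mul_add, ← sum_add_distrib]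
  congr 1
  refine sum_congr rfl fun χ _ => ?_
  rw [← map_pow, hι.neg_one_pow, map_one, neg_eq_neg_one_mul lam, map_mul]
  ring

theorem ffHypCoeff_duplication (hθ : θ ≠ 1) (hφ : orderOf φ = 2) (A₁ A₂ B₁ B₂ ψ : MulChar F ℂ) :
    ffHypCoeff θ ![A₁, φ * A₁, A₂, φ * A₂] ![B₁, φ * B₁, B₂, φ * B₂] ψ
      = ffHypCoeff θ ![A₁ ^ 2, A₂ ^ 2] ![B₁ ^ 2, B₂ ^ 2] (ψ ^ 2) := by
  have hψ4 : ψ 4 ≠ 0 := ((isUnit_four (ringChar_ne_two_of_orderOf_eq_two hφ)).map ψ).ne_zero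
  simp only [ffHypCoeff, Fin.prod_univ_succ, Fin.prod_univ_zero, Matrix.cons_val_zero,
    Matrix.cons_val_succ, mul_one]
  calc _ = (gaussSum (A₁ * ψ) θ / gaussSum A₁ θ *
          (gaussSum (φ * A₁ * ψ) θ / gaussSum (φ * A₁) θ)) *
        (gaussSum (B₁ * ψ)⁻¹ θ / gaussSum B₁⁻¹ θ *
          (gaussSum (φ * B₁ * ψ)⁻¹ θ / gaussSum (φ * B₁)⁻¹ θ)) *
        ((gaussSum (A₂ * ψ) θ / gaussSum A₂ θ *
          (gaussSum (φ * A₂ * ψ) θ / gaussSum (φ * A₂) θ)) *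
        (gaussSum (B₂ * ψ)⁻¹ θ / gaussSum B₂⁻¹ θ *
          (gaussSum (φ * B₂ * ψ)⁻¹ θ / gaussSum (φ * B₂)⁻¹ θ))) := by ring
    _ = _ := by
      rw [gaussSum_mul_div_gaussSum_mul hθ hφ, gaussSum_mul_div_gaussSum_mul hθ hφ,
        gaussSum_inv_mul_div_gaussSum_inv_mul hθ hφ, gaussSum_inv_mul_div_gaussSum_inv_mul hθ hφ]
      field_simp

end Hypergeometric

theorem stmt0_general {F : Type} [Field F] [Fintype F]
    (θ : AddChar F ℂ) (hθ : θ ≠ 1)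
    (φ : MulChar F ℂ) (hφ : orderOf φ = 2)
    (A C : MulChar F ℂ) (hC : C ^ 2 = 1) (lam : F) :
    ffHyp θ ![A ^ 2, A⁻¹ ^ 2] ![1, 1] lam + ffHyp θ ![A ^ 2, A⁻¹ ^ 2] ![1, 1] (-lam)
      = ffHyp θ ![A, φ * A, A⁻¹, φ * A⁻¹] ![1, φ, C, φ * C] (lam ^ 2) := by
  let : Fintype (MulChar F ℂ) := Fintype.ofFinite _
  rw [ffHyp_add_ffHyp_neg θ (by simp) _ _ lam, ffHyp_eq, ← MulChar.sum_comp_sq hφ]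
  congr 1
  refine sum_congr rfl fun ψ _ => ?_
  have hB : ![(1 : MulChar F ℂ), φ, C, φ * C] = ![1, φ * 1, C, φ * C] := by rw [mul_one]
  have hsign : ψ (-1) ^ 4 = 1 := by rw [← map_pow]; norm_num
  have hlam : ψ (lam ^ 2) = (ψ ^ 2) lam := by rw [MulChar.pow_apply' _ two_ne_zero, map_pow]
  rw [hB, ffHypCoeff_duplication θ hθ hφ, one_pow, hC, Fintype.card_fin, hsign, hlam, mul_one]

theorem stmt0 {F : Type} [Field F] [Fintype F] (hodd : Odd (Fintype.card F))
    (θ : AddChar F ℂ) (hθ : θ ≠ 1)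
    (φ : MulChar F ℂ) (hφ : orderOf φ = 2)
    (A C : MulChar F ℂ) (hA : A ^ 2 ≠ 1) (hC : C ^ 2 = 1) (lam : F) :
    ffHyp θ ![A ^ 2, A⁻¹ ^ 2] ![1, 1] lam + ffHyp θ ![A ^ 2, A⁻¹ ^ 2] ![1, 1] (-lam)
      = ffHyp θ ![A, φ * A, A⁻¹, φ * A⁻¹] ![1, φ, C, φ * C] (lam ^ 2) :=
  stmt0_general θ hθ φ hφ A C hC lam
end

section
/- Let n and m be positive integers and let q be a prime power with q ≡ 1 (mod n). Let χ_n be a multiplicative character of F_q^* of order n and let A_1,…,A_m, B_1,…,B_m be multiplicative characters of F_q^*. If λ ∈ F_q is not an n-th power in F_q (i.e., there is no μ ∈ F_q with μ^n = λ), then _{nm}F_{nm}( (A_i χ_n^l : 1 ≤ i ≤ m, 0 ≤ l ≤ n−1) ; (B_i χ_n^l : 1 ≤ i ≤ m, 0 ≤ l ≤ n−1) | λ )_q = 0. -/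
theorem stmt2 {F : Type} [Field F] [Fintype F]
    (θ : AddChar F ℂ) (hθ : θ ≠ 1)
    (n m : ℕ) (hn : 0 < n) (hm : 0 < m) (hq : Fintype.card F ≡ 1 [MOD n])
    (χn : MulChar F ℂ) (hχn : orderOf χn = n)
    (A B : Fin m → MulChar F ℂ) (lam : F) (hlam : ¬ ∃ μ : F, μ ^ n = lam) :
    ffHyp θ (fun p : Fin m × Fin n => A p.1 * χn ^ (p.2 : ℕ))
        (fun p : Fin m × Fin n => B p.1 * χn ^ (p.2 : ℕ)) lam = 0 := by
  classical
  haveI : NeZero n := ⟨hn.ne'⟩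
  letI instMC : Fintype (MulChar F ℂ) := Fintype.ofFinite _
  have hlam0 : lam ≠ 0 := fun h => hlam ⟨0, by rw [zero_pow hn.ne', h]⟩
  -- key fact: χn lam ≠ 1
  have key : χn lam ≠ 1 := by
    intro h1
    obtain ⟨u, rfl⟩ := hlam0.isUnit
    obtain ⟨g, hg⟩ := IsCyclic.exists_generator (α := Fˣ)
    have hgen : ∀ x : Fˣ, ∃ a : ℕ, g ^ a = x := fun x =>
      (Submonoid.mem_powers_iff _ _).mp (mem_powers_iff_mem_zpowers.mpr (hg x))
    obtain ⟨a, ha⟩ := hgen u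
    have horder : orderOf (χn (g : F)) = n := by
      rw [← hχn, orderOf_eq_orderOf_iff]
      intro k
      constructor
      · intro hk
        rcases Nat.eq_zero_or_pos k with rfl | hk0
        · simp
        apply MulChar.ext
        intro x
        obtain ⟨j, hj⟩ := hgen x
        rw [MulChar.one_apply_coe, MulChar.pow_apply_coe, ← hj, Units.val_pow_eq_pow_val,
          map_pow, ← pow_mul, mul_comm j k, pow_mul, hk, one_pow]
      · intro hk
        rw [← MulChar.pow_apply_coe, hk, MulChar.one_apply_coe]
    have hpow1 : (χn (g : F)) ^ a = 1 := by
      rw [← map_pow, ← Units.val_pow_eq_pow_val, ha, h1]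
    obtain ⟨b, rfl⟩ := horder ▸ orderOf_dvd_of_pow_eq_one hpow1
    refine hlam ⟨(g : F) ^ b, ?_⟩
    rw [← pow_mul, mul_comm b n, ← Units.val_pow_eq_pow_val, ha]
  -- order facts
  have hχnn : χn ^ n = 1 := by rw [← hχn]; exact pow_orderOf_eq_one χn
  have hpow : ∀ j : Fin n, χn ^ (((j + 1 : Fin n)) : ℕ) = χn ^ ((j : ℕ) + 1) := by
    intro j
    rw [pow_eq_pow_iff_modEq, hχn]
    simp only [Fin.add_def, Fin.val_one']
    exact (Nat.mod_modEq _ n).trans ((Nat.mod_modEq 1 n).add_left _)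
  -- the summand
  set T : MulChar F ℂ → ℂ := fun χ =>
    (∏ p : Fin m × Fin n,
      (gaussSum (A p.1 * χn ^ (p.2 : ℕ) * χ) θ / gaussSum (A p.1 * χn ^ (p.2 : ℕ)) θ) *
      (gaussSum ((B p.1 * χn ^ (p.2 : ℕ) * χ)⁻¹) θ / gaussSum ((B p.1 * χn ^ (p.2 : ℕ))⁻¹) θ)) *
    χ (-1) ^ (Fintype.card (Fin m × Fin n)) * χ lam with hT
  have habc : ∀ (a c : MulChar F ℂ) (j : ℕ),
      a * χn ^ j * (c * χn) = a * (χn ^ j * χn) * c := fun a c j => by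
    rw [mul_comm c χn, ← mul_assoc, mul_assoc a]
  have hstep : ∀ χ : MulChar F ℂ, T (χ * χn) = χn lam * T χ := by
    intro χ
    have hprod : (∏ p : Fin m × Fin n,
        (gaussSum (A p.1 * χn ^ (p.2 : ℕ) * (χ * χn)) θ / gaussSum (A p.1 * χn ^ (p.2 : ℕ)) θ) *
        (gaussSum ((B p.1 * χn ^ (p.2 : ℕ) * (χ * χn))⁻¹) θ /
          gaussSum ((B p.1 * χn ^ (p.2 : ℕ))⁻¹) θ)) =
        ∏ p : Fin m × Fin n,
        (gaussSum (A p.1 * χn ^ (p.2 : ℕ) * χ) θ / gaussSum (A p.1 * χn ^ (p.2 : ℕ)) θ) *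
        (gaussSum ((B p.1 * χn ^ (p.2 : ℕ) * χ)⁻¹) θ /
          gaussSum ((B p.1 * χn ^ (p.2 : ℕ))⁻¹) θ) := by
      simp only [div_eq_mul_inv, Finset.prod_mul_distrib]
      have hA : (∏ p : Fin m × Fin n, gaussSum (A p.1 * χn ^ (p.2 : ℕ) * (χ * χn)) θ) =
          ∏ p : Fin m × Fin n, gaussSum (A p.1 * χn ^ (p.2 : ℕ) * χ) θ := by
        apply Fintype.prod_equiv (Equiv.prodCongr (Equiv.refl (Fin m)) (Equiv.addRight (1 : Fin n)))
        intro p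
        simp only [Equiv.prodCongr_apply, Equiv.coe_refl, Equiv.coe_addRight,
          Prod.map_fst, Prod.map_snd, id_eq]
        rw [hpow p.2, pow_succ, habc]
      have hB : (∏ p : Fin m × Fin n, gaussSum ((B p.1 * χn ^ (p.2 : ℕ) * (χ * χn))⁻¹) θ) =
          ∏ p : Fin m × Fin n, gaussSum ((B p.1 * χn ^ (p.2 : ℕ) * χ)⁻¹) θ := by
        apply Fintype.prod_equiv (Equiv.prodCongr (Equiv.refl (Fin m)) (Equiv.addRight (1 : Fin n)))
        intro p
        simp only [Equiv.prodCongr_apply, Equiv.coe_refl, Equiv.coe_addRight,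
          Prod.map_fst, Prod.map_snd, id_eq]
        rw [hpow p.2, pow_succ, habc]
      rw [hA, hB]
    have hneg : (χ * χn) (-1) ^ (Fintype.card (Fin m × Fin n)) =
        χ (-1) ^ (Fintype.card (Fin m × Fin n)) := by
      have hcard : Fintype.card (Fin m × Fin n) = m * n := by simp
      have hχn1 : χn (-1) ^ n = 1 := by
        have := MulChar.pow_apply_coe χn n (-1 : Fˣ)
        rw [hχnn, MulChar.one_apply_coe] at this
        simpa using this.symm
      rw [MulChar.mul_apply, mul_pow, hcard, mul_comm m n, pow_mul, pow_mul, hχn1, one_pow,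
        mul_one]
    rw [hT]
    simp only [hprod, hneg, MulChar.mul_apply χ χn lam]
    ring
  -- the sum vanishes
  have hshift : (∑ χ : MulChar F ℂ, T (χ * χn)) = ∑ χ : MulChar F ℂ, T χ :=
    Fintype.sum_equiv (Equiv.mulRight χn) _ _ (fun χ => rfl)
  have hself : (∑ χ : MulChar F ℂ, T χ) = χn lam * ∑ χ : MulChar F ℂ, T χ := by
    conv_lhs => rw [← hshift]
    rw [Finset.mul_sum]
    exact Finset.sum_congr rfl fun χ _ => hstep χ
  have hzero : (∑ χ : MulChar F ℂ, T χ) = 0 := by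
    have h2 : (1 - χn lam) * (∑ χ : MulChar F ℂ, T χ) = 0 := by
      rw [sub_mul, one_mul, ← hself, sub_self]
    rcases mul_eq_zero.mp h2 with h | h
    · exact absurd (by linear_combination -h : χn lam = 1) key
    · exact h
  simp only [ffHyp]
  exact mul_eq_zero_of_right _ hzero
end

section
/- Let q be an odd prime power and let A_1,…,A_m, B_1,…,B_m be multiplicative characters of F_q^*. If λ ∈ F_q is not a square in F_q, then _{2m}F_{2m}(A_1, φA_1, A_2, φA_2, …, A_m, φA_m; B_1, φB_1, B_2, φB_2, …, B_m, φB_m | λ)_q = 0. -/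
lemma phi_nonsquare {F : Type} [Field F] [Fintype F] (φ : MulChar F ℂ) (hφ : orderOf φ = 2)
    {lam : F} (hlam : ¬ ∃ μ : F, μ ^ 2 = lam) : φ lam = -1 := by
  have hlam0 : lam ≠ 0 := by
    rintro rfl; exact hlam ⟨0, by ring⟩
  obtain ⟨u, rfl⟩ := (isUnit_iff_ne_zero.mpr hlam0)
  obtain ⟨g, hg⟩ := IsCyclic.exists_generator (α := Fˣ)
  obtain ⟨k, rfl⟩ : u ∈ Submonoid.powers g := by
    rw [mem_powers_iff_mem_zpowers]; exact hg u
  have hφ2 : φ * φ = 1 := by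
    have := pow_orderOf_eq_one φ
    rwa [hφ, pow_two] at this
  have hg2 : φ ↑g * φ ↑g = 1 := by
    have := congrArg (fun ψ : MulChar F ℂ => ψ ↑g) hφ2
    simpa [MulChar.mul_apply, MulChar.one_apply_coe] using this
  have hgval : φ ↑g = -1 := by
    rcases mul_self_eq_one_iff.mp hg2 with h | h
    · exfalso
      have : φ = 1 := by
        apply MulChar.ext
        intro a
        obtain ⟨n, rfl⟩ : a ∈ Submonoid.powers g := by
          rw [mem_powers_iff_mem_zpowers]; exact hg a
        rw [MulChar.one_apply_coe, Units.val_pow_eq_pow_val, map_pow, h, one_pow]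
      rw [this, orderOf_one] at hφ
      norm_num at hφ
    · exact h
  rcases Nat.even_or_odd k with he | ho
  · exfalso
    obtain ⟨j, rfl⟩ := he
    exact hlam ⟨(↑g : F) ^ j, by rw [Units.val_pow_eq_pow_val, ← pow_mul, mul_two]⟩
  · rw [Units.val_pow_eq_pow_val, map_pow, hgval, ho.neg_one_pow]


theorem stmt4 {F : Type} [Field F] [Fintype F] (hodd : Odd (Fintype.card F))
    (θ : AddChar F ℂ) (hθ : θ ≠ 1)
    (φ : MulChar F ℂ) (hφ : orderOf φ = 2)
    (m : ℕ) (hm : 0 < m) (A B : Fin m → MulChar F ℂ)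
    (lam : F) (hlam : ¬ ∃ μ : F, μ ^ 2 = lam) :
    ffHyp θ (fun p : Fin m × Fin 2 => A p.1 * φ ^ (p.2 : ℕ))
        (fun p : Fin m × Fin 2 => B p.1 * φ ^ (p.2 : ℕ)) lam = 0 := by
  classical
  letI : Fintype (MulChar F ℂ) := Fintype.ofFinite _
  have hφ2 : φ * φ = 1 := by
    have := pow_orderOf_eq_one φ
    rwa [hφ, pow_two] at this
  have hφlam : φ lam = -1 := phi_nonsquare φ hφ hlam
  have hφneg : φ (-1) * φ (-1) = 1 := by
    rw [← map_mul]; norm_num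
  set n := Fintype.card (Fin m × Fin 2) with hn
  have hneven : ∃ j, n = 2 * j := ⟨m, by simp [hn, Fintype.card_prod, mul_comm]⟩
  -- the summand
  set f : MulChar F ℂ → ℂ := fun χ =>
      (∏ p : Fin m × Fin 2,
        (gaussSum (A p.1 * φ ^ (p.2 : ℕ) * χ) θ / gaussSum (A p.1 * φ ^ (p.2 : ℕ)) θ) *
        (gaussSum ((B p.1 * φ ^ (p.2 : ℕ) * χ)⁻¹) θ / gaussSum ((B p.1 * φ ^ (p.2 : ℕ))⁻¹) θ)) *
      χ (-1) ^ n * χ lam with hf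
  have hswap : ∀ ε : Fin 2,
      φ ^ (ε : ℕ) * φ = φ ^ ((Equiv.swap (0 : Fin 2) 1 ε : Fin 2) : ℕ) := by
    intro ε
    fin_cases ε <;> simp [hφ2]
  have hchar : ∀ (C : MulChar F ℂ) (ε : Fin 2) (χ : MulChar F ℂ),
      C * φ ^ (ε : ℕ) * (φ * χ) = C * φ ^ ((Equiv.swap (0 : Fin 2) 1 ε : Fin 2) : ℕ) * χ := by
    intro C ε χ
    rw [mul_assoc, ← mul_assoc (φ ^ (ε : ℕ)), hswap, mul_assoc]
  have key : ∀ χ : MulChar F ℂ, f (φ * χ) = - f χ := by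
    intro χ
    have hprod :
        (∏ p : Fin m × Fin 2,
          (gaussSum (A p.1 * φ ^ (p.2 : ℕ) * (φ * χ)) θ / gaussSum (A p.1 * φ ^ (p.2 : ℕ)) θ) *
          (gaussSum ((B p.1 * φ ^ (p.2 : ℕ) * (φ * χ))⁻¹) θ /
            gaussSum ((B p.1 * φ ^ (p.2 : ℕ))⁻¹) θ)) =
        (∏ p : Fin m × Fin 2,
          (gaussSum (A p.1 * φ ^ (p.2 : ℕ) * χ) θ / gaussSum (A p.1 * φ ^ (p.2 : ℕ)) θ) *
          (gaussSum ((B p.1 * φ ^ (p.2 : ℕ) * χ)⁻¹) θ /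
            gaussSum ((B p.1 * φ ^ (p.2 : ℕ))⁻¹) θ)) := by
      simp only [div_mul_div_comm]
      rw [Finset.prod_div_distrib, Finset.prod_div_distrib]
      congr 1
      refine Fintype.prod_equiv
        (Equiv.prodCongr (Equiv.refl (Fin m)) (Equiv.swap (0 : Fin 2) 1)) _ _ ?_
      intro p
      simp only [Equiv.prodCongr_apply, Equiv.refl_apply, Prod.map_fst, Prod.map_snd]
      rw [hchar (A p.1) p.2 χ, hchar (B p.1) p.2 χ]
    have hm1 : (φ * χ) (-1) ^ n = χ (-1) ^ n := by
      obtain ⟨j, hj⟩ := hneven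
      rw [MulChar.mul_apply, mul_pow, hj, pow_mul, pow_two, hφneg, one_pow, one_mul]
    have hlamv : (φ * χ) lam = - χ lam := by
      rw [MulChar.mul_apply, hφlam, neg_one_mul]
    rw [hf]
    simp only []
    rw [hprod, hm1, hlamv]
    ring
  have hsum : (∑ χ : MulChar F ℂ, f χ) = 0 := by
    have h1 : (∑ χ : MulChar F ℂ, f χ) = ∑ χ : MulChar F ℂ, f (φ * χ) :=
      (Fintype.sum_equiv (Equiv.mulLeft φ) (fun χ => f (φ * χ)) f (fun χ => rfl)).symm
    have h2 : (∑ χ : MulChar F ℂ, f (φ * χ)) = - ∑ χ : MulChar F ℂ, f χ := by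
      simp [key]
    have h3 : (2 : ℂ) * ∑ χ : MulChar F ℂ, f χ = 0 := by linear_combination h1.trans h2
    exact (mul_eq_zero.mp h3).resolve_left two_ne_zero
  show (-1 : ℂ) / ((Fintype.card F : ℂ) - 1) * ∑ χ : MulChar F ℂ, f χ = 0
  rw [hsum, mul_zero]
end

section
/- Let l ≥ 3 be an integer and let p be an odd prime with gcd(p, l) = 1. Let q = p^r for a positive integer r with q ≢ 1 (mod l), let f′ be a positive integer such that q^{f′} ≡ 1 (mod l), and set f = r f′. Then for every integer j, Σ_{1 ≤ t < l, gcd(t,l)=1} ( ⌊⟨t/l − j/(q−1)⟩ · p^{f−1}⌋ − ⌊⟨t/l − j/(q−1)⟩ · p^{r−1}⌋ ) ≡ 0 (mod 2), where the sum is over integers t with 1 ≤ t < l and gcd(t, l) = 1. -/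
/-!
Write `x t = ⟨t/l - A⟩` with `A = j/(q-1)`. Since `(q - 1) A = j` is an integer,
`⟨q · x t⟩ = x (q t mod l)`, and `t ↦ q t mod l` permutes the residues coprime to `l`.
Hence `G c := ∑ₜ ⌊x t · c⌋` satisfies `G (q n) = G q · n + G n`, so
`G (q^m n) ≡ G n (mod 2)` as soon as `G q` is even. And
`G q = (q - 1) ∑ₜ x t = (q - 1) φ(l)/2 - φ(l) j - (q - 1) B` with `B ∈ ℤ`,
which is even because `q` is odd and `φ(l)` is even for `l ≥ 3`.
Now take `n = p^(r-1)` and `m = f' - 1`.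
-/

open Finset

def coprimeResidues (l : ℕ) : Finset ℕ := (Ico 1 l).filter (fun t => Nat.Coprime t l)

section coprimeResidues

variable {l : ℕ}

theorem mem_coprimeResidues (hl : l ≠ 1) {t : ℕ} :
    t ∈ coprimeResidues l ↔ t < l ∧ t.Coprime l := by
  rw [coprimeResidues, mem_filter, mem_Ico]
  constructor
  · rintro ⟨⟨-, htl⟩, htc⟩
    exact ⟨htl, htc⟩
  · rintro ⟨htl, htc⟩
    refine ⟨⟨Nat.pos_of_ne_zero ?_, htl⟩, htc⟩
    rintro rfl
    exact hl (Nat.coprime_zero_left l |>.mp htc)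

theorem card_coprimeResidues (hl : l ≠ 1) : #(coprimeResidues l) = l.totient := by
  rw [Nat.totient_eq_card_coprime]
  congr 1
  ext t
  rw [mem_coprimeResidues hl, mem_filter, mem_range, Nat.coprime_comm]

theorem mul_mod_mem_coprimeResidues (hl : l ≠ 1) {m t : ℕ} (hm : m.Coprime l)
    (ht : t ∈ coprimeResidues l) : m * t % l ∈ coprimeResidues l := by
  rw [mem_coprimeResidues hl] at ht ⊢
  exact ⟨Nat.mod_lt _ (by omega), by simpa using hm.mul_left ht.2⟩

theorem sum_coprimeResidues_comp_mul_mod {M : Type*} [AddCommMonoid M] (hl : l ≠ 1) {m : ℕ}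
    (hm : m.Coprime l) (g : ℕ → M) :
    ∑ t ∈ coprimeResidues l, g (m * t % l) = ∑ t ∈ coprimeResidues l, g t := by
  have hmaps : Set.MapsTo (fun t => m * t % l) (coprimeResidues l) (coprimeResidues l) :=
    fun t ht => mul_mod_mem_coprimeResidues hl hm ht
  have hinj : Set.InjOn (fun t => m * t % l) (coprimeResidues l) := by
    intro a ha b hb hab
    have hmod : a ≡ b [MOD l] :=
      Nat.ModEq.cancel_left_of_coprime (Nat.coprime_comm.mp hm) hab
    rw [mem_coe, mem_coprimeResidues hl] at ha hb
    exact Nat.ModEq.eq_of_lt_of_lt hmod ha.1 hb.1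
  have hbij := ((coprimeResidues l).finite_toSet.injOn_iff_bijOn_of_mapsTo hmaps).mp hinj
  exact sum_nbij _ hmaps hbij.injOn hbij.surjOn (fun _ _ => rfl)

theorem two_mul_sum_coprimeResidues (hl : l ≠ 1) :
    2 * ∑ t ∈ coprimeResidues l, t = l * l.totient := by
  have hlt : ∀ t ∈ coprimeResidues l, t < l := fun t ht => ((mem_coprimeResidues hl).mp ht).1
  have hreflect : ∀ t ∈ coprimeResidues l, l - t ∈ coprimeResidues l := by
    intro t ht
    rw [coprimeResidues, mem_filter, mem_Ico] at ht ⊢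
    exact ⟨by omega, (Nat.coprime_self_sub_left ht.1.2.le).mpr ht.2⟩
  have hinv : ∀ t ∈ coprimeResidues l, l - (l - t) = t := fun t ht => by
    have := hlt t ht; omega
  have hsymm : ∑ t ∈ coprimeResidues l, (l - t) = ∑ t ∈ coprimeResidues l, t :=
    sum_nbij' _ _ hreflect hreflect hinv hinv (fun _ _ => rfl)
  calc 2 * ∑ t ∈ coprimeResidues l, t
      = ∑ t ∈ coprimeResidues l, (t + (l - t)) := by
        rw [sum_add_distrib, hsymm, two_mul]
    _ = ∑ t ∈ coprimeResidues l, l := sum_congr rfl fun t ht => by have := hlt t ht; omega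
    _ = l * l.totient := by rw [sum_const, card_coprimeResidues hl, smul_eq_mul, mul_comm]

end coprimeResidues

section floorSum

variable {K : Type*} [Field K] [LinearOrder K] [IsStrictOrderedRing K] [FloorRing K]

theorem Int.floor_mul_natCast_eq (z : K) (n : ℕ) :
    ⌊z * n⌋ = ⌊z⌋ * n + ⌊Int.fract z * n⌋ := by
  have hsplit : z * n = Int.fract z * n + ((⌊z⌋ * n : ℤ) : K) := by
    push_cast
    rw [← add_mul, Int.fract_add_floor]
  rw [hsplit, Int.floor_add_intCast, add_comm]

def residueFract (l : ℕ) (A : K) (t : ℕ) : K := Int.fract ((t : K) / l - A)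

def floorSum (l : ℕ) (A : K) (c : ℕ) : ℤ :=
  ∑ t ∈ coprimeResidues l, ⌊residueFract l A t * c⌋

variable {l q : ℕ} {A : K} {j : ℤ}

theorem fract_residueFract_mul (hl : l ≠ 0) (hA : ((q : K) - 1) * A = j) (t : ℕ) :
    Int.fract (residueFract l A t * q) = residueFract l A (q * t % l) := by
  have hdiv : ((q * t : ℕ) : K) = l * ((q * t / l : ℕ) : K) + ((q * t % l : ℕ) : K) := by
    exact_mod_cast (Nat.div_add_mod (q * t) l).symm
  generalize q * t / l = d, q * t % l = m at hdiv ⊢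
  have hshift : residueFract l A t * q =
      (m : K) / l - A + ((d - j - ⌊(t : K) / l - A⌋ * q : ℤ) : K) := by
    have hlK : (l : K) ≠ 0 := Nat.cast_ne_zero.mpr hl
    push_cast at hdiv ⊢
    rw [residueFract, Int.fract]
    field_simp
    linear_combination hdiv - (l : K) * hA
  rw [hshift, Int.fract_add_intCast, residueFract]

theorem floorSum_mul (hl : l ≠ 1) (hql : q.Coprime l) (hA : ((q : K) - 1) * A = j) (n : ℕ) :
    floorSum l A (q * n) = floorSum l A q * n + floorSum l A n := by
  have hterm : ∀ t ∈ coprimeResidues l, ⌊residueFract l A t * ((q * n : ℕ) : K)⌋ =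
      ⌊residueFract l A t * q⌋ * n + ⌊residueFract l A (q * t % l) * n⌋ := by
    intro t ht
    have hl0 : l ≠ 0 := by have := ((mem_coprimeResidues hl).mp ht).1; omega
    rw [Nat.cast_mul, ← mul_assoc, Int.floor_mul_natCast_eq, fract_residueFract_mul hl0 hA]
  rw [floorSum, sum_congr rfl hterm, sum_add_distrib, ← sum_mul,
    sum_coprimeResidues_comp_mul_mod hl hql (fun t => ⌊residueFract l A t * n⌋)]
  rfl

theorem floorSum_eq_mul_sum_residueFract (hl : l ≠ 1) (hql : q.Coprime l)
    (hA : ((q : K) - 1) * A = j) :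
    (floorSum l A q : K) = (q - 1) * ∑ t ∈ coprimeResidues l, residueFract l A t := by
  have hterm : ∀ t ∈ coprimeResidues l, (⌊residueFract l A t * q⌋ : K) =
      residueFract l A t * q - residueFract l A (q * t % l) := by
    intro t ht
    have hl0 : l ≠ 0 := by have := ((mem_coprimeResidues hl).mp ht).1; omega
    rw [← fract_residueFract_mul hl0 hA, Int.self_sub_fract]
  rw [floorSum, Int.cast_sum, sum_congr rfl hterm, sum_sub_distrib,
    sum_coprimeResidues_comp_mul_mod hl hql (residueFract l A), ← sum_mul]
  ring

theorem sum_residueFract (hl : 1 < l) :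
    ∑ t ∈ coprimeResidues l, residueFract l A t =
      l.totient / 2 - l.totient * A -
        ((∑ t ∈ coprimeResidues l, ⌊(t : K) / l - A⌋ : ℤ) : K) := by
  have hsum : ((∑ t ∈ coprimeResidues l, t : ℕ) : K) = l * l.totient / 2 := by
    rw [← Nat.cast_mul, ← two_mul_sum_coprimeResidues hl.ne']
    push_cast
    ring
  have hlK : (l : K) ≠ 0 := by positivity
  simp only [residueFract, Int.fract, sum_sub_distrib, ← sum_div, sum_const,
    card_coprimeResidues hl.ne', nsmul_eq_mul, Int.cast_sum]
  rw [← Nat.cast_sum, hsum]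
  field_simp

theorem even_floorSum (hl : 2 < l) (hq : Odd q) (hql : q.Coprime l)
    (hA : ((q : K) - 1) * A = j) : Even (floorSum l A q) := by
  set B : ℤ := ∑ t ∈ coprimeResidues l, ⌊(t : K) / l - A⌋
  have hK : 2 * (floorSum l A q : K) =
      (q - 1) * l.totient - 2 * l.totient * j - 2 * (q - 1) * B := by
    rw [floorSum_eq_mul_sum_residueFract (by omega) hql hA, sum_residueFract (by omega)]
    linear_combination (-2 * l.totient : K) * hA
  have hZ : 2 * floorSum l A q = (q - 1) * l.totient - 2 * l.totient * j - 2 * (q - 1) * B := by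
    exact_mod_cast hK
  obtain ⟨a, rfl⟩ := hq
  obtain ⟨b, hb⟩ := Nat.totient_even hl
  refine ⟨a * b - b * j - a * B, ?_⟩
  rw [hb] at hZ
  push_cast at hZ
  linarith

theorem floorSum_pow_mul_modEq (hl : 2 < l) (hq : Odd q) (hql : q.Coprime l)
    (hA : ((q : K) - 1) * A = j) (m n : ℕ) :
    floorSum l A (q ^ m * n) ≡ floorSum l A n [ZMOD 2] := by
  have heven : floorSum l A q ≡ 0 [ZMOD 2] :=
    Int.modEq_zero_iff_dvd.mpr (even_floorSum hl hq hql hA).two_dvd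
  induction m with
  | zero => rw [pow_zero, one_mul]
  | succ m ih =>
    rw [pow_succ', mul_assoc, floorSum_mul (by omega) hql hA]
    simpa using (heven.mul_right _).add ih

end floorSum

theorem stmt6_general (l : ℕ) (hl : 3 ≤ l) (p : ℕ) (hp2 : Odd p)
    (hpl : Nat.gcd p l = 1) (r : ℕ) (q : ℕ) (hq : q = p ^ r)
    (hql : ¬ q ≡ 1 [MOD l]) (f' : ℕ) (hf' : 0 < f')
    (f : ℕ) (hf : f = r * f') (j : ℤ) :
    (2 : ℤ) ∣ ∑ t ∈ (Finset.Ico 1 l).filter (fun t => Nat.Coprime t l),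
      (⌊Int.fract ((t : ℚ) / l - (j : ℚ) / ((q : ℚ) - 1)) * (p : ℚ) ^ (f - 1)⌋
        - ⌊Int.fract ((t : ℚ) / l - (j : ℚ) / ((q : ℚ) - 1)) * (p : ℚ) ^ (r - 1)⌋) := by
  have hq1 : q ≠ 1 := by
    rintro rfl
    exact hql rfl
  have hr : 0 < r := Nat.pos_of_ne_zero fun hr => hq1 (by rw [hq, hr, pow_zero])
  have hA : ((q : ℚ) - 1) * (j / ((q : ℚ) - 1)) = j :=
    mul_div_cancel₀ _ (sub_ne_zero.mpr (by exact_mod_cast hq1))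
  have hexp : p ^ (f - 1) = q ^ (f' - 1) * p ^ (r - 1) := by
    rw [hq, ← pow_mul, ← pow_add, hf]
    congr 1
    have : r ≤ r * f' := Nat.le_mul_of_pos_right r hf'
    rw [Nat.mul_sub_one]
    omega
  have hmod := floorSum_pow_mul_modEq (by omega) (hq ▸ hp2.pow)
    (hq ▸ Nat.Coprime.pow_left r hpl) hA (f' - 1) (p ^ (r - 1))
  rw [← hexp] at hmod
  have hdvd := hmod.symm.dvd
  rwa [floorSum, floorSum, ← sum_sub_distrib, Nat.cast_pow, Nat.cast_pow] at hdvd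

theorem stmt6 (l : ℕ) (hl : 3 ≤ l) (p : ℕ) (hp : p.Prime) (hp2 : Odd p)
    (hpl : Nat.gcd p l = 1) (r : ℕ) (hr : 0 < r) (q : ℕ) (hq : q = p ^ r)
    (hql : ¬ q ≡ 1 [MOD l]) (f' : ℕ) (hf' : 0 < f') (hqf' : q ^ f' ≡ 1 [MOD l])
    (f : ℕ) (hf : f = r * f') (j : ℤ) :
    (2 : ℤ) ∣ ∑ t ∈ (Finset.Ico 1 l).filter (fun t => Nat.Coprime t l),
      (⌊Int.fract ((t : ℚ) / l - (j : ℚ) / ((q : ℚ) - 1)) * (p : ℚ) ^ (f - 1)⌋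
        - ⌊Int.fract ((t : ℚ) / l - (j : ℚ) / ((q : ℚ) - 1)) * (p : ℚ) ^ (r - 1)⌋) :=
  stmt6_general l hl p hp2 hpl r q hq hql f' hf' f hf j
end

section
/- Let p be an odd prime and let a ∈ ℚ with 0 < a < 1 whose denominator is coprime to p. Let f and r be positive integers with r ≤ f and (p^f − 1)·a ∈ ℤ. For a rational number x with denominator coprime to p, let x_0 denote the unique integer in {1, 2, …, p} congruent to x modulo p (i.e., whose image in ℤ/pℤ equals the image of x). Then Σ_{k=0}^{r−1} (⟨a p^k⟩)_0 ≡ r − (p^f − 1)a + ⌊a p^{f−1}⌋ − ⌊a p^{r−1}⌋ (mod p − 1). -/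
/-- The residue of a rational number `x` (whose denominator is coprime to `p`) in `ZMod p`. -/
def ratResidue (p : ℕ) (x : ℚ) : ZMod p := (x.num : ZMod p) * (x.den : ZMod p)⁻¹

/-- For a rational `x` with denominator coprime to `p`, the unique integer in `{1, …, p}`
congruent to `x` modulo `p`. -/
def ratResidueRep (p : ℕ) (x : ℚ) : ℕ :=
  if ratResidue p x = 0 then p else (ratResidue p x).val

private lemma rep_of_residue (p : ℕ) (hp : p.Prime) (x : ℚ) (c : ℤ)
    (hc0 : 0 ≤ c) (hcp : c < p)
    (hres : ratResidue p x = -(c : ZMod p)) :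
    (ratResidueRep p x : ℤ) = (p : ℤ) - c := by
  haveI : Fact p.Prime := ⟨hp⟩
  rcases eq_or_lt_of_le hc0 with h0 | h0
  · rw [ratResidueRep, if_pos (by rw [hres, ← h0]; simp)]
    omega
  · have hcnd : ¬ ((p:ℤ) ∣ c) := fun h => by have := Int.le_of_dvd h0 h; omega
    have hcne : (c : ZMod p) ≠ 0 := by
      rw [Ne, ZMod.intCast_zmod_eq_zero_iff_dvd]; exact hcnd
    have hne : ratResidue p x ≠ 0 := by rw [hres]; simpa using hcne
    rw [ratResidueRep, if_neg hne, hres]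
    have hlt : c.toNat < p := by omega
    have h1 : -((c:ℤ) : ZMod p) = ((p - c.toNat : ℕ) : ZMod p) := by
      have hc' : ((c:ℤ) : ZMod p) = (c.toNat : ZMod p) := by
        conv_lhs => rw [← Int.toNat_of_nonneg hc0]
        push_cast
        ring
      rw [hc', Nat.cast_sub hlt.le, ZMod.natCast_self, zero_sub]
    rw [h1, ZMod.val_cast_of_lt (by omega : p - c.toNat < p)]
    omega

private lemma ratResidue_of_div (p : ℕ) (hp : p.Prime) (x : ℚ) (m D : ℤ)
    (hDp : ¬ (p:ℤ) ∣ D) (hDm : (D : ZMod p) = -1) (hx : x * (D:ℚ) = (m:ℚ)) :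
    ratResidue p x = -(m : ZMod p) := by
  haveI : Fact p.Prime := ⟨hp⟩
  have hD0 : D ≠ 0 := by rintro rfl; exact hDp (dvd_zero _)
  have hDQ : (D:ℚ) ≠ 0 := Int.cast_ne_zero.mpr hD0
  have hxeq : x = (m:ℚ)/(D:ℚ) := by
    field_simp
    exact hx
  have hden : (x.den : ℤ) ∣ D := by
    rw [hxeq, ← Rat.divInt_eq_div]
    exact Rat.den_dvd m D
  have hdenz : ((x.den : ℕ) : ZMod p) ≠ 0 := by
    rw [Ne, ZMod.natCast_eq_zero_iff]
    intro h
    exact hDp ((Int.natCast_dvd_natCast.mpr h).trans hden)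
  have hnum : x.num * D = m * x.den := by
    have h2 := hx
    rw [← Rat.num_div_den x, div_mul_eq_mul_div,
      div_eq_iff (by exact_mod_cast x.den_nz : ((x.den:ℚ)) ≠ 0)] at h2
    exact_mod_cast h2
  have hz := congrArg (fun t : ℤ => (t : ZMod p)) hnum
  push_cast at hz
  rw [hDm] at hz
  show (x.num : ZMod p) * (x.den : ZMod p)⁻¹ = -(m:ZMod p)
  rw [show (x.num : ZMod p) = -(m:ZMod p) * (x.den : ZMod p) from by linear_combination -hz]
  rw [mul_assoc, mul_inv_cancel₀ hdenz, mul_one]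

theorem stmt7 (p : ℕ) (hp : p.Prime) (hp2 : Odd p)
    (a : ℚ) (ha0 : 0 < a) (ha1 : a < 1) (haden : ¬ (p : ℤ) ∣ (a.den : ℤ))
    (f r : ℕ) (hf : 0 < f) (hr : 0 < r) (hrf : r ≤ f)
    (N : ℤ) (hN : ((p : ℚ) ^ f - 1) * a = (N : ℚ)) :
    ((∑ k ∈ Finset.range r, (ratResidueRep p (Int.fract (a * (p : ℚ) ^ k)) : ℤ))
      ≡ (r : ℤ) - N + ⌊a * (p : ℚ) ^ (f - 1)⌋ - ⌊a * (p : ℚ) ^ (r - 1)⌋ [ZMOD ((p : ℤ) - 1)]) := by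
  haveI : Fact p.Prime := ⟨hp⟩
  obtain ⟨e, rfl⟩ : ∃ e, f = e + 1 := ⟨f - 1, by omega⟩
  obtain ⟨s, rfl⟩ : ∃ s, r = s + 1 := ⟨r - 1, by omega⟩
  simp only [Nat.add_sub_cancel] at *
  set g : ℕ → ℤ := fun k => ⌊a * (p:ℚ)^k⌋ with hg
  set D : ℤ := (p:ℤ)^(e+1) - 1 with hDdef
  have hp2' : 2 ≤ p := hp.two_le
  have hDp : ¬ (p:ℤ) ∣ D := by
    intro h
    have h1 : (p:ℤ) ∣ (p:ℤ)^(e+1) := dvd_pow_self _ (Nat.succ_ne_zero e)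
    have h2 : (p:ℤ) ∣ 1 := by
      have := dvd_sub h1 h
      simpa [hDdef] using this
    have := Int.le_of_dvd one_pos h2
    omega
  have hDm : (D : ZMod p) = -1 := by
    rw [hDdef]
    push_cast
    rw [ZMod.natCast_self]
    simp
  have hNa : a * (p:ℚ)^(e+1) = a + N := by linarith [hN]
  -- residue/representative computation for indices ≥ 1
  have hfloor : ∀ k : ℕ, g (k+1) = ⌊Int.fract (a * (p:ℚ)^k) * p⌋ + g k * p := by
    intro k
    have h1 : a * (p:ℚ)^(k+1) = Int.fract (a * (p:ℚ)^k) * p + ((g k * p : ℤ) : ℚ) := by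
      rw [hg]
      push_cast
      rw [Int.fract]
      ring
    rw [hg]
    dsimp only
    rw [h1, Int.floor_add_intCast]
  have hcb : ∀ k : ℕ, 0 ≤ g (k+1) - p * g k ∧ g (k+1) - p * g k < p := by
    intro k
    have h1 := hfloor k
    have h2 : 0 ≤ ⌊Int.fract (a * (p:ℚ)^k) * p⌋ := by
      apply Int.floor_nonneg.mpr
      exact mul_nonneg (Int.fract_nonneg _) (by positivity)
    have h3 : ⌊Int.fract (a * (p:ℚ)^k) * p⌋ < p := by
      apply Int.floor_lt.mpr
      have := Int.fract_lt_one (a * (p:ℚ)^k)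
      have hpQ : (0:ℚ) < p := by positivity
      push_cast
      nlinarith
    constructor <;> linarith
  have hrep : ∀ k : ℕ, (ratResidueRep p (Int.fract (a * (p:ℚ)^(k+1))) : ℤ)
      = (p:ℤ) - (g (k+1) - p * g k) := by
    intro k
    apply rep_of_residue p hp _ _ (hcb k).1 (hcb k).2
    have h1 : ratResidue p (Int.fract (a * (p:ℚ)^(k+1)))
        = -((N * (p:ℤ)^(k+1) - D * g (k+1) : ℤ) : ZMod p) := by
      apply ratResidue_of_div p hp _ _ D hDp hDm
      rw [Int.fract, hg]
      push_cast [hDdef]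
      linear_combination ((p:ℚ)^(k+1)) * hN
    rw [h1]
    congr 1
    rw [← sub_eq_zero, ← Int.cast_sub, ZMod.intCast_zmod_eq_zero_iff_dvd]
    exact ⟨N * (p:ℤ)^k - (p:ℤ)^e * g (k+1) + g k, by rw [hDdef]; ring⟩
  have hg0 : g 0 = 0 := by
    rw [hg]
    simp only [pow_zero, mul_one]
    exact Int.floor_eq_zero_iff.mpr ⟨ha0.le, ha1⟩
  have hge : g (e+1) = N := by
    rw [hg]
    dsimp only
    rw [hNa, Int.floor_add_intCast]
    have : ⌊a⌋ = 0 := Int.floor_eq_zero_iff.mpr ⟨ha0.le, ha1⟩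
    omega
  have hrep0 : (ratResidueRep p (Int.fract (a * (p:ℚ)^0)) : ℤ) = (p:ℤ) - (N - p * g e) := by
    have hfr : Int.fract (a * (p:ℚ)^0) = Int.fract (a * (p:ℚ)^(e+1)) := by
      rw [pow_zero, mul_one, hNa, Int.fract_add_intCast]
    rw [hfr, hrep e, hge]
  rw [Finset.sum_range_succ']
  rw [Finset.sum_congr rfl (fun k _ => hrep k), hrep0]
  have htel : ∑ k ∈ Finset.range s, g (k+1) = (∑ k ∈ Finset.range s, g k) + g s := by
    have h1 := Finset.sum_range_succ' g s
    have h2 := Finset.sum_range_succ g s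
    linarith [hg0]
  have hsplit : ∑ k ∈ Finset.range s, ((p:ℤ) - (g (k+1) - p * g k))
      = s * p - ((∑ k ∈ Finset.range s, g k) + g s) + p * (∑ k ∈ Finset.range s, g k) := by
    rw [Finset.sum_sub_distrib, Finset.sum_sub_distrib, Finset.sum_const, ← Finset.mul_sum,
      Finset.card_range, htel]
    push_cast
    ring
  rw [hsplit]
  rw [Int.modEq_iff_dvd]
  refine ⟨-(((s:ℤ)+1) + (∑ k ∈ Finset.range s, g k) + g e), ?_⟩
  push_cast
  ring
end

section
/- Let m and n be positive integers, let a_1,…,a_m, b_1,…,b_m ∈ ℂ be such that for every i and every nonnegative integer k one has n·b_i + k ≠ 0, let ξ_n ∈ ℂ be a primitive n-th root of unity, and let z ∈ ℂ with |z| < 1. Then Σ_{l=0}^{n−1} _mF_m[n a_1, …, n a_m; n b_1, …, n b_m | ξ_n^l · z] = n · _{nm}F_{nm}[ (a_i + l/n : 1 ≤ i ≤ m, 0 ≤ l ≤ n−1) ; (b_i + l/n : 1 ≤ i ≤ m, 0 ≤ l ≤ n−1) | z^n ], where the right-hand side is the series of order nm whose upper parameters are the nm numbers a_i + l/n and whose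 lower parameters are the nm numbers b_i + l/n; all series involved converge absolutely for |z| < 1. -/
/-- The `k`-th coefficient of the classical generalized hypergeometric series with upper
parameters `a` and lower parameters `b` (indexed by a finite type `ι`):
`(∏ᵢ (aᵢ)ₖ) / (∏ᵢ (bᵢ)ₖ)` where `(x)ₖ` is the Pochhammer (rising factorial) symbol. -/
noncomputable def hypCoeff {ι : Type} [Fintype ι] (a b : ι → ℂ) (k : ℕ) : ℂ :=
  (∏ i, (ascPochhammer ℂ k).eval (a i)) / (∏ i, (ascPochhammer ℂ k).eval (b i))

/-- The classical generalized hypergeometric series `ₘFₘ[a ; b | z]`. -/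
noncomputable def cHyp {ι : Type} [Fintype ι] (a b : ι → ℂ) (z : ℂ) : ℂ :=
  ∑' k : ℕ, hypCoeff a b k * z ^ k

/-! Gauss's multiplication formula `(n x)_{n j} = n ^ (n j) ∏_{l < n} (x + l / n)_j` identifies the
`j`-th coefficient of the series of order `n m` with the `(n j)`-th coefficient of the series
with parameters `n aᵢ, n bᵢ`. Summing the latter over the rotations `z ↦ ξ ^ l * z` keeps exactly
the terms whose index is a multiple of `n`, each multiplied by `n`, because `∑_{l < n} ξ ^ (l k)`
is `n` or `0` according as `n ∣ k`. Convergence for `‖z‖ < 1` is the ratio test. -/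

open Finset Filter Topology Polynomial

section Pochhammer

variable {K : Type*}

theorem ascPochhammer_eval_eq_prod_range [CommSemiring K] (k : ℕ) (x : K) :
    (ascPochhammer K k).eval x = ∏ j ∈ range k, (x + j) := by
  induction k with
  | zero => simp
  | succ k ih => rw [ascPochhammer_succ_eval, ih, prod_range_succ]

theorem ascPochhammer_eval_add_eq_mul [CommSemiring K] (k l : ℕ) (x : K) :
    (ascPochhammer K (k + l)).eval x
      = (ascPochhammer K k).eval x * (ascPochhammer K l).eval (x + k) := by
  rw [← ascPochhammer_mul, eval_mul, eval_comp]
  simp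

theorem ascPochhammer_eval_natCast_mul [Field K] {n : ℕ} (hn : (n : K) ≠ 0) (x : K) (j : ℕ) :
    (ascPochhammer K (n * j)).eval (n * x)
      = (n : K) ^ (n * j) * ∏ l ∈ range n, (ascPochhammer K j).eval (x + l / n) := by
  induction j with
  | zero => simp
  | succ j ih =>
    have hblock : (ascPochhammer K n).eval (n * x + (n * j : ℕ))
        = (n : K) ^ n * ∏ l ∈ range n, (x + l / n + j) := by
      rw [ascPochhammer_eval_eq_prod_range, show (n : K) ^ n = ∏ _l ∈ range n, (n : K) by simp,
        ← prod_mul_distrib]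
      refine prod_congr rfl fun l _ => ?_
      push_cast
      field_simp
      ring
    rw [Nat.mul_succ, ascPochhammer_eval_add_eq_mul, ih, hblock]
    simp only [ascPochhammer_succ_eval, prod_mul_distrib]
    ring

end Pochhammer

theorem IsPrimitiveRoot.sum_range_pow_pow {K : Type*} [Field K] {ξ : K} {n : ℕ}
    (hξ : IsPrimitiveRoot ξ n) (k : ℕ) :
    ∑ l ∈ range n, (ξ ^ k) ^ l = if n ∣ k then (n : K) else 0 := by
  split_ifs with hk
  · simp [(hξ.pow_eq_one_iff_dvd k).mpr hk]
  · have hne : ξ ^ k ≠ 1 := fun h => hk ((hξ.pow_eq_one_iff_dvd k).mp h)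
    rw [geom_sum_eq hne, ← pow_mul, mul_comm, pow_mul, hξ.pow_eq_one, one_pow, sub_self, zero_div]

theorem summable_mul_mul_pow_of_norm_eq_one {c : ℕ → ℂ} {ζ z : ℂ} (hζ : ‖ζ‖ = 1)
    (hc : Summable fun k => c k * z ^ k) : Summable fun k => c k * (ζ * z) ^ k := by
  rw [← summable_norm_iff] at hc ⊢
  simpa [mul_pow, hζ] using hc

theorem sum_tsum_mul_rootOfUnity_pow {ξ : ℂ} {n : ℕ} (hn : 0 < n) (hξ : IsPrimitiveRoot ξ n)
    {c : ℕ → ℂ} {z : ℂ} (hc : Summable fun k => c k * z ^ k) :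
    ∑ l ∈ range n, ∑' k, c k * (ξ ^ l * z) ^ k = n * ∑' j, c (n * j) * (z ^ n) ^ j := by
  have hnorm (l : ℕ) : ‖ξ ^ l‖ = 1 := by rw [norm_pow, hξ.norm'_eq_one hn.ne', one_pow]
  have hmul : Function.Injective (n * ·) := fun _ _ h => Nat.eq_of_mul_eq_mul_left hn h
  have hsupp : Function.support (fun k => if n ∣ k then (n : ℂ) * (c k * z ^ k) else 0)
      ⊆ Set.range (n * ·) :=
    Function.support_subset_iff'.mpr fun k hk => if_neg fun ⟨j, hj⟩ => hk ⟨j, hj.symm⟩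
  calc ∑ l ∈ range n, ∑' k, c k * (ξ ^ l * z) ^ k
      = ∑' k, (∑ l ∈ range n, (ξ ^ k) ^ l) * (c k * z ^ k) := by
        rw [← Summable.tsum_finsetSum fun l _ => summable_mul_mul_pow_of_norm_eq_one (hnorm l) hc]
        refine tsum_congr fun k => ?_
        rw [sum_mul]
        refine sum_congr rfl fun l _ => ?_
        ring
    _ = ∑' k, if n ∣ k then (n : ℂ) * (c k * z ^ k) else 0 := by
        simp_rw [hξ.sum_range_pow_pow, ite_mul, zero_mul]
    _ = ∑' j, if n ∣ n * j then (n : ℂ) * (c (n * j) * z ^ (n * j)) else 0 :=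
        (hmul.tsum_eq hsupp).symm
    _ = n * ∑' j, c (n * j) * (z ^ n) ^ j := by
        simp_rw [if_pos (dvd_mul_right n _), pow_mul, tsum_mul_left]

section Hypergeometric

variable {ι : Type} [Fintype ι]

theorem hypCoeff_succ (a b : ι → ℂ) (k : ℕ) :
    hypCoeff a b (k + 1) = hypCoeff a b k * ∏ i, (a i + k) / (b i + k) := by
  simp only [hypCoeff, ascPochhammer_succ_eval, prod_mul_distrib, prod_div_distrib]
  ring

theorem summable_hypCoeff_mul_pow (a b : ι → ℂ) {w : ℂ} (hw : ‖w‖ < 1) :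
    Summable fun k => hypCoeff a b k * w ^ k := by
  have hratio : Tendsto (fun k : ℕ => ‖w * ∏ i, (a i + k) / (b i + k)‖) atTop (𝓝 ‖w‖) := by
    have := tendsto_finsetProd univ fun i _ =>
      tendsto_add_mul_div_add_mul_atTop_nhds (a i) (b i) 1 one_ne_zero
    simpa using (this.const_mul w).norm
  obtain ⟨r, hwr, hr1⟩ := exists_between hw
  refine summable_of_ratio_norm_eventually_le hr1 ?_
  filter_upwards [hratio.eventually (gt_mem_nhds hwr)] with k hk
  calc ‖hypCoeff a b (k + 1) * w ^ (k + 1)‖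
      = ‖w * ∏ i, (a i + k) / (b i + k)‖ * ‖hypCoeff a b k * w ^ k‖ := by
        rw [hypCoeff_succ, ← norm_mul]
        congr 1
        ring
    _ ≤ r * ‖hypCoeff a b k * w ^ k‖ := by gcongr

theorem hypCoeff_natCast_mul {n : ℕ} (hn : n ≠ 0) (a b : ι → ℂ) (j : ℕ) :
    hypCoeff (fun p : ι × Fin n => a p.1 + (p.2 : ℕ) / n) (fun p => b p.1 + (p.2 : ℕ) / n) j
      = hypCoeff (fun i => (n : ℂ) * a i) (fun i => (n : ℂ) * b i) (n * j) := by
  have hnC : (n : ℂ) ≠ 0 := Nat.cast_ne_zero.mpr hn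
  have hgauss (x : ι → ℂ) : ∏ i, (ascPochhammer ℂ (n * j)).eval (n * x i)
      = ((n : ℂ) ^ (n * j)) ^ Fintype.card ι *
          ∏ p : ι × Fin n, (ascPochhammer ℂ j).eval (x p.1 + (p.2 : ℕ) / n) := by
    simp only [ascPochhammer_eval_natCast_mul hnC, prod_mul_distrib, prod_const, card_univ,
      Fintype.prod_prod_type, prod_range]
  rw [hypCoeff, hypCoeff, hgauss, hgauss, mul_div_mul_left _ _ (by positivity)]

end Hypergeometric

theorem stmt8_general (m n : ℕ) (hn : 0 < n)
    (a b : Fin m → ℂ)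
    (ξ : ℂ) (hξ : IsPrimitiveRoot ξ n) (z : ℂ) (hz : ‖z‖ < 1) :
    (∀ l ∈ Finset.range n,
        Summable (fun k : ℕ =>
          hypCoeff (fun i => (n : ℂ) * a i) (fun i => (n : ℂ) * b i) k * (ξ ^ l * z) ^ k)) ∧
    Summable (fun k : ℕ =>
        hypCoeff (fun p : Fin m × Fin n => a p.1 + (p.2 : ℕ) / n)
          (fun p : Fin m × Fin n => b p.1 + (p.2 : ℕ) / n) k * (z ^ n) ^ k) ∧
    ∑ l ∈ Finset.range n,
        cHyp (fun i => (n : ℂ) * a i) (fun i => (n : ℂ) * b i) (ξ ^ l * z)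
      = n * cHyp (fun p : Fin m × Fin n => a p.1 + (p.2 : ℕ) / n)
          (fun p : Fin m × Fin n => b p.1 + (p.2 : ℕ) / n) (z ^ n) := by
  have hξz (l : ℕ) : ‖ξ ^ l * z‖ < 1 := by
    rwa [norm_mul, norm_pow, hξ.norm'_eq_one hn.ne', one_pow, one_mul]
  refine ⟨fun l _ => summable_hypCoeff_mul_pow _ _ (hξz l), summable_hypCoeff_mul_pow _ _ ?_, ?_⟩
  · simpa using pow_lt_one₀ (norm_nonneg z) hz hn.ne'
  · simp only [cHyp, hypCoeff_natCast_mul hn.ne']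
    exact sum_tsum_mul_rootOfUnity_pow hn hξ (summable_hypCoeff_mul_pow _ _ hz)

theorem stmt8 (m n : ℕ) (hm : 0 < m) (hn : 0 < n)
    (a b : Fin m → ℂ) (hb : ∀ i, ∀ k : ℕ, (n : ℂ) * b i + k ≠ 0)
    (ξ : ℂ) (hξ : IsPrimitiveRoot ξ n) (z : ℂ) (hz : ‖z‖ < 1) :
    (∀ l ∈ Finset.range n,
        Summable (fun k : ℕ =>
          hypCoeff (fun i => (n : ℂ) * a i) (fun i => (n : ℂ) * b i) k * (ξ ^ l * z) ^ k)) ∧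
    Summable (fun k : ℕ =>
        hypCoeff (fun p : Fin m × Fin n => a p.1 + (p.2 : ℕ) / n)
          (fun p : Fin m × Fin n => b p.1 + (p.2 : ℕ) / n) k * (z ^ n) ^ k) ∧
    ∑ l ∈ Finset.range n,
        cHyp (fun i => (n : ℂ) * a i) (fun i => (n : ℂ) * b i) (ξ ^ l * z)
      = n * cHyp (fun p : Fin m × Fin n => a p.1 + (p.2 : ℕ) / n)
          (fun p : Fin m × Fin n => b p.1 + (p.2 : ℕ) / n) (z ^ n) :=
  stmt8_general m n hn a b ξ hξ z hz
end
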